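/- arXiv:2411.06938 — 3 statements merged into one kernel-verified Lean document; each statement's English description precedes it below -/
import Mathlib

section
/- If X is a sequence class that is finitely injective and finitely determined, then X is injective. -/
open Filter Topology NormedSpace
open scoped TensorProduct ENNReal

/-- Truncation of a sequence: keep the first `k` entries, zero afterwards. -/
def trunc {E : Type} [Zero E] (x : ℕ → E) (k : ℕ) : ℕ → E := fun j => if j < k then x j else 0

/-- A sequence class: a rule assigning to every Banach space `E` a Banach space of
`E`-valued sequences containing `c₀₀(E)`, contained in `ℓ∞(E)` with norm-one inclusions,
and such that `‖x · e_j‖ = ‖x‖`.  Membership and the norm are given explicitly. -/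
structure SequenceClass (𝕜 : Type) [RCLike 𝕜] : Type 1 where
  Mem : ∀ (E : Type) [NormedAddCommGroup E] [NormedSpace 𝕜 E] [CompleteSpace E],
    (ℕ → E) → Prop
  Norm : ∀ (E : Type) [NormedAddCommGroup E] [NormedSpace 𝕜 E] [CompleteSpace E],
    (ℕ → E) → ℝ
  mem_zero : ∀ (E : Type) [NormedAddCommGroup E] [NormedSpace 𝕜 E] [CompleteSpace E],
    Mem E 0
  mem_add : ∀ (E : Type) [NormedAddCommGroup E] [NormedSpace 𝕜 E] [CompleteSpace E]
    (x y : ℕ → E), Mem E x → Mem E y → Mem E (x + y)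
  mem_smul : ∀ (E : Type) [NormedAddCommGroup E] [NormedSpace 𝕜 E] [CompleteSpace E]
    (c : 𝕜) (x : ℕ → E), Mem E x → Mem E (c • x)
  norm_nonneg : ∀ (E : Type) [NormedAddCommGroup E] [NormedSpace 𝕜 E] [CompleteSpace E]
    (x : ℕ → E), 0 ≤ Norm E x
  norm_eq_zero : ∀ (E : Type) [NormedAddCommGroup E] [NormedSpace 𝕜 E] [CompleteSpace E]
    (x : ℕ → E), Mem E x → (Norm E x = 0 ↔ x = 0)
  norm_add_le : ∀ (E : Type) [NormedAddCommGroup E] [NormedSpace 𝕜 E] [CompleteSpace E]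
    (x y : ℕ → E), Mem E x → Mem E y → Norm E (x + y) ≤ Norm E x + Norm E y
  norm_smul : ∀ (E : Type) [NormedAddCommGroup E] [NormedSpace 𝕜 E] [CompleteSpace E]
    (c : 𝕜) (x : ℕ → E), Mem E x → Norm E (c • x) = ‖c‖ * Norm E x
  mem_single : ∀ (E : Type) [NormedAddCommGroup E] [NormedSpace 𝕜 E] [CompleteSpace E]
    (j : ℕ) (v : E), Mem E (Pi.single j v)
  coord_norm_le : ∀ (E : Type) [NormedAddCommGroup E] [NormedSpace 𝕜 E] [CompleteSpace E]
    (x : ℕ → E), Mem E x → ∀ j, ‖x j‖ ≤ Norm E x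
  norm_single : ∀ (E : Type) [NormedAddCommGroup E] [NormedSpace 𝕜 E] [CompleteSpace E]
    (j : ℕ) (v : E), Norm E (Pi.single j v) = ‖v‖
  complete : ∀ (E : Type) [NormedAddCommGroup E] [NormedSpace 𝕜 E] [CompleteSpace E]
    (u : ℕ → ℕ → E), (∀ n, Mem E (u n)) →
    (∀ ε : ℝ, 0 < ε → ∃ N, ∀ m ≥ N, ∀ n ≥ N, Norm E (u m - u n) < ε) →
    ∃ x, Mem E x ∧ Filter.Tendsto (fun n => Norm E (u n - x)) Filter.atTop (nhds 0)

variable {𝕜 : Type} [RCLike 𝕜]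

/-- A sequence class is finitely determined if membership and the norm are determined
by the finite truncations. -/
def SequenceClass.FinitelyDetermined (X : SequenceClass 𝕜) : Prop :=
  ∀ (E : Type) [NormedAddCommGroup E] [NormedSpace 𝕜 E] [CompleteSpace E] (x : ℕ → E),
    (X.Mem E x ↔ ∃ C : ℝ, ∀ k, X.Norm E (trunc x k) ≤ C) ∧
    (X.Mem E x → X.Norm E x = ⨆ k, X.Norm E (trunc x k))

/-- A sequence class is injective if membership and norms can be computed after composing
with a metric injection. -/
def SequenceClass.Injective (X : SequenceClass 𝕜) : Prop :=
  ∀ (E F : Type) [NormedAddCommGroup E] [NormedSpace 𝕜 E] [CompleteSpace E]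
    [NormedAddCommGroup F] [NormedSpace 𝕜 F] [CompleteSpace F]
    (i : E →ₗᵢ[𝕜] F) (x : ℕ → E),
    X.Mem F (fun j => i (x j)) →
      X.Mem E x ∧ X.Norm E x ≤ X.Norm F (fun j => i (x j))

/-- A sequence class is finitely injective if the above inequality holds for finitely
supported truncations. -/
def SequenceClass.FinitelyInjective (X : SequenceClass 𝕜) : Prop :=
  ∀ (E F : Type) [NormedAddCommGroup E] [NormedSpace 𝕜 E] [CompleteSpace E]
    [NormedAddCommGroup F] [NormedSpace 𝕜 F] [CompleteSpace F]
    (i : E →ₗᵢ[𝕜] F) (x : ℕ → E) (k : ℕ),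
    X.Norm E (trunc x k) ≤ X.Norm F (trunc (fun j => i (x j)) k)

/-- A sequence class is linearly stable if every bounded operator `T : E → F` induces a
bounded operator between the sequence spaces with norm at most `‖T‖`. -/
def SequenceClass.LinearlyStable (X : SequenceClass 𝕜) : Prop :=
  ∀ (E F : Type) [NormedAddCommGroup E] [NormedSpace 𝕜 E] [CompleteSpace E]
    [NormedAddCommGroup F] [NormedSpace 𝕜 F] [CompleteSpace F]
    (T : E →L[𝕜] F) (x : ℕ → E), X.Mem E x →
    X.Mem F (fun j => T (x j)) ∧
      X.Norm F (fun j => T (x j)) ≤ ‖T‖ * X.Norm E x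

/-- The extension property of a sequence class: sequences of functionals on a subspace
extend coordinatewise to the whole space without increasing the `X`-norm. -/
def SequenceClass.ExtensionProperty (X : SequenceClass 𝕜) : Prop :=
  ∀ (E : Type) [NormedAddCommGroup E] [NormedSpace 𝕜 E] [CompleteSpace E]
    (M : Submodule 𝕜 E) (φ : ℕ → StrongDual 𝕜 M),
    X.Mem (StrongDual 𝕜 M) φ →
    ∃ ψ : ℕ → StrongDual 𝕜 E,
      X.Mem (StrongDual 𝕜 E) ψ ∧
      X.Norm (StrongDual 𝕜 E) ψ ≤ X.Norm (StrongDual 𝕜 M) φ ∧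
      ∀ (j : ℕ) (x : M), ψ j (x : E) = φ j x

/-- `X'` is a dual class for `X`: for every Banach space `E`, the canonical summation
pairing `Ψ((φ_j))((x_j)) = Σ_j φ_j(x_j)` is an isometric isomorphism `X'(E') ≅₁ X(E)'`. -/
def SequenceClass.IsDualClassFor (X' X : SequenceClass 𝕜) : Prop :=
  ∀ (E : Type) [NormedAddCommGroup E] [NormedSpace 𝕜 E] [CompleteSpace E],
    (∀ φ : ℕ → StrongDual 𝕜 E, X'.Mem (StrongDual 𝕜 E) φ →
      ∀ x : ℕ → E, X.Mem E x → Summable (fun j => φ j (x j))) ∧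
    (∀ φ : ℕ → StrongDual 𝕜 E, X'.Mem (StrongDual 𝕜 E) φ →
      X'.Norm (StrongDual 𝕜 E) φ =
        ⨆ x : {x : ℕ → E // X.Mem E x ∧ X.Norm E x ≤ 1}, ‖∑' j, φ j (x.1 j)‖) ∧
    (∀ f : (ℕ → E) → 𝕜,
      (∀ x y, X.Mem E x → X.Mem E y → f (x + y) = f x + f y) →
      (∀ (c : 𝕜) x, X.Mem E x → f (c • x) = c * f x) →
      (∃ C : ℝ, ∀ x, X.Mem E x → ‖f x‖ ≤ C * X.Norm E x) →
      ∃ φ : ℕ → StrongDual 𝕜 E, X'.Mem (StrongDual 𝕜 E) φ ∧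
        ∀ x, X.Mem E x → f x = ∑' j, φ j (x j))

theorem SequenceClass.FinitelyDetermined.mem_and_norm_le_of_trunc_le {X : SequenceClass 𝕜}
    (hX : X.FinitelyDetermined) {E F : Type}
    [NormedAddCommGroup E] [NormedSpace 𝕜 E] [CompleteSpace E]
    [NormedAddCommGroup F] [NormedSpace 𝕜 F] [CompleteSpace F]
    {x : ℕ → E} {y : ℕ → F} (hy : X.Mem F y)
    (hle : ∀ k, X.Norm E (trunc x k) ≤ X.Norm F (trunc y k)) :
    X.Mem E x ∧ X.Norm E x ≤ X.Norm F y := by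
  obtain ⟨C, hC⟩ := ((hX F y).1).mp hy
  have hx : X.Mem E x := ((hX E x).1).mpr ⟨C, fun k => (hle k).trans (hC k)⟩
  refine ⟨hx, ?_⟩
  rw [(hX E x).2 hx, (hX F y).2 hy]
  exact ciSup_mono ⟨C, Set.forall_mem_range.mpr hC⟩ hle

/-- A finitely injective and finitely determined sequence class is injective. -/
theorem finitelyInjective_finitelyDetermined_implies_injective
    (X : SequenceClass 𝕜) (h₁ : X.FinitelyInjective) (h₂ : X.FinitelyDetermined) :
    X.Injective := by
  intro E F _ _ _ _ _ _ i x hmem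
  exact h₂.mem_and_norm_le_of_trunc_le hmem (h₁ E F i x)
end

section
/- For 1 < p < ∞ and any Banach space E, the dual of the space ℓ_p⟨E⟩ of Cohen strongly p-summable sequences is isometrically isomorphic to ℓ_{p*}^w(E'), the weakly p*-summable sequences in E', via the canonical pairing ((φ_j), (x_j)) ↦ Σ_j φ_j(x_j), where 1/p + 1/p* = 1. -/
open Filter Topology NormedSpace
open scoped TensorProduct ENNReal

/-- Weak `p`-summability for an `E`-valued sequence. -/
def WeaklySummable (𝕜 : Type) [RCLike 𝕜] (p : ℝ)
    {E : Type} [NormedAddCommGroup E] [NormedSpace 𝕜 E] (x : ℕ → E) : Prop :=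
  ∀ φ : StrongDual 𝕜 E, Summable (fun j => ‖φ (x j)‖ ^ p)

/-- The weak `ℓ_p` norm `‖(x_j)‖_{w,p} = sup_{φ ∈ B_{E'}} ‖(φ(x_j))_j‖_p`. -/
noncomputable def weakNorm (𝕜 : Type) [RCLike 𝕜] (p : ℝ)
    {E : Type} [NormedAddCommGroup E] [NormedSpace 𝕜 E] (x : ℕ → E) : ℝ :=
  ⨆ φ : {φ : StrongDual 𝕜 E // ‖φ‖ ≤ 1}, (∑' j, ‖φ.1 (x j)‖ ^ p) ^ (1 / p)

/-- Membership in `ℓ_p^w(E')` for a sequence of functionals, expressed through the unit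
ball of `E` (for dual-valued sequences this computes the weak `ℓ_p` norm). -/
def DualWeaklySummable (𝕜 : Type) [RCLike 𝕜] (p : ℝ) {E : Type} [NormedAddCommGroup E] [NormedSpace 𝕜 E]
    (φ : ℕ → StrongDual 𝕜 E) : Prop :=
  ∃ C : ℝ, ∀ x : E, ‖x‖ ≤ 1 →
    Summable (fun n => ‖φ n x‖ ^ p) ∧ (∑' n, ‖φ n x‖ ^ p) ^ (1 / p) ≤ C

/-- The weak `ℓ_p` norm of a sequence of functionals. -/
noncomputable def dualWeakNorm (𝕜 : Type) [RCLike 𝕜] (p : ℝ) {E : Type} [NormedAddCommGroup E] [NormedSpace 𝕜 E]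
    (φ : ℕ → StrongDual 𝕜 E) : ℝ :=
  ⨆ x : {x : E // ‖x‖ ≤ 1}, (∑' n, ‖φ n x.1‖ ^ p) ^ (1 / p)

/-- Membership in `ℓ_p^{mid}(E)`: the mid `p`-summable sequences. -/
def MidSummable (𝕜 : Type) [RCLike 𝕜] (p : ℝ) {E : Type} [NormedAddCommGroup E] [NormedSpace 𝕜 E]
    (x : ℕ → E) : Prop :=
  ∃ C : ℝ, ∀ φ : ℕ → StrongDual 𝕜 E,
    DualWeaklySummable 𝕜 p φ → dualWeakNorm 𝕜 p φ ≤ 1 →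
    (∀ n, Summable fun j => ‖φ n (x j)‖ ^ p) ∧
    Summable (fun n => ∑' j, ‖φ n (x j)‖ ^ p) ∧
    (∑' n, ∑' j, ‖φ n (x j)‖ ^ p) ^ (1 / p) ≤ C

/-- The mid `p`-summing norm `‖(x_j)‖_{p,mid}`. -/
noncomputable def midNorm (𝕜 : Type) [RCLike 𝕜] (p : ℝ) {E : Type} [NormedAddCommGroup E] [NormedSpace 𝕜 E]
    (x : ℕ → E) : ℝ :=
  ⨆ φ : {φ : ℕ → StrongDual 𝕜 E // DualWeaklySummable 𝕜 p φ ∧ dualWeakNorm 𝕜 p φ ≤ 1},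
    (∑' n, ∑' j, ‖φ.1 n (x j)‖ ^ p) ^ (1 / p)

/-- Membership in `ℓ_p⟨E⟩`: the Cohen strongly `p`-summable sequences, where `q = p*`. -/
def CohenSummable (𝕜 : Type) [RCLike 𝕜] (q : ℝ) {E : Type} [NormedAddCommGroup E] [NormedSpace 𝕜 E]
    (x : ℕ → E) : Prop :=
  ∃ C : ℝ, ∀ φ : ℕ → StrongDual 𝕜 E,
    DualWeaklySummable 𝕜 q φ → dualWeakNorm 𝕜 q φ ≤ 1 →
    Summable (fun j => ‖φ j (x j)‖) ∧ ∑' j, ‖φ j (x j)‖ ≤ C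

/-- The Cohen norm on `ℓ_p⟨E⟩`, where `q = p*`. -/
noncomputable def cohenNorm (𝕜 : Type) [RCLike 𝕜] (q : ℝ) {E : Type} [NormedAddCommGroup E] [NormedSpace 𝕜 E]
    (x : ℕ → E) : ℝ :=
  ⨆ φ : {φ : ℕ → StrongDual 𝕜 E // DualWeaklySummable 𝕜 q φ ∧ dualWeakNorm 𝕜 q φ ≤ 1},
    ∑' j, ‖φ.1 j (x j)‖

/-!
Rescaling `φ` into the unit ball of `ℓ_q^w(E')` turns the definition of the Cohen norm into the
pairing bound `∑ ‖φ j (x j)‖ ≤ ‖φ‖_{w,q} ‖x‖_{⟨q⟩}`. Conversely, for `‖v‖ ≤ 1` the extremal vector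
`b` of Hölder's inequality for `(φ j v)_j` yields the Cohen sequence `(b j • v)_j` of norm at most
`‖b‖_p ≤ 1` on which the pairing equals `‖(φ j v)_j‖_q`. This gives both the isometry and, for a
bounded functional `f`, the weak `q`-summability of `φ j := f ∘ Pi.single j`.

Finally `f x = ∑ φ j (x j)` because the tails of a Cohen sequence tend to `0` in Cohen norm. If they
did not, a gliding hump would glue `K` admissible functionals along disjoint blocks, each carrying
mass `ε`, into one functional of weak norm at most `K ^ (1 / q)`, forcing `K ε ≤ K ^ (1 / q) ‖x‖`
for every `K`, which fails since `q > 1`.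
-/

open scoped Function ComplexConjugate

section

variable {𝕜 : Type} [RCLike 𝕜] {E : Type} [NormedAddCommGroup E] [NormedSpace 𝕜 E] {p q : ℝ}

namespace DualWeaklySummable

variable {φ : ℕ → StrongDual 𝕜 E}

theorem summable (hφ : DualWeaklySummable 𝕜 q φ) {x : E} (hx : ‖x‖ ≤ 1) :
    Summable fun n => ‖φ n x‖ ^ q :=
  let ⟨_, hC⟩ := hφ
  (hC x hx).1

theorem le_dualWeakNorm (hφ : DualWeaklySummable 𝕜 q φ) {x : E} (hx : ‖x‖ ≤ 1) :
    (∑' n, ‖φ n x‖ ^ q) ^ (1 / q) ≤ dualWeakNorm 𝕜 q φ := by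
  obtain ⟨C, hC⟩ := hφ
  refine le_ciSup (f := fun x : {x : E // ‖x‖ ≤ 1} => (∑' n, ‖φ n x.1‖ ^ q) ^ (1 / q))
    ⟨C, ?_⟩ ⟨x, hx⟩
  rintro _ ⟨x, rfl⟩
  exact (hC x.1 x.2).2

theorem dualWeakNorm_nonneg (hφ : DualWeaklySummable 𝕜 q φ) : 0 ≤ dualWeakNorm 𝕜 q φ :=
  (Real.rpow_nonneg (tsum_nonneg fun _ => by positivity) _).trans
    (hφ.le_dualWeakNorm (by simp : ‖(0 : E)‖ ≤ 1))

theorem norm_le_dualWeakNorm (hq : 0 < q) (hφ : DualWeaklySummable 𝕜 q φ) (j : ℕ) :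
    ‖φ j‖ ≤ dualWeakNorm 𝕜 q φ := by
  refine ContinuousLinearMap.opNorm_le_of_unit_norm hφ.dualWeakNorm_nonneg fun x hx => ?_
  calc ‖φ j x‖ = (‖φ j x‖ ^ q) ^ (1 / q) := by
        rw [one_div, Real.rpow_rpow_inv (norm_nonneg _) hq.ne']
    _ ≤ (∑' n, ‖φ n x‖ ^ q) ^ (1 / q) :=
        Real.rpow_le_rpow (by positivity)
          ((hφ.summable hx.le).le_tsum j fun _ _ => by positivity) (by positivity)
    _ ≤ dualWeakNorm 𝕜 q φ := hφ.le_dualWeakNorm hx.le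

end DualWeaklySummable

theorem dualWeaklySummable_and_dualWeakNorm_le {φ : ℕ → StrongDual 𝕜 E} {C : ℝ}
    (h : ∀ x : E, ‖x‖ ≤ 1 →
      Summable (fun n => ‖φ n x‖ ^ q) ∧ (∑' n, ‖φ n x‖ ^ q) ^ (1 / q) ≤ C) :
    DualWeaklySummable 𝕜 q φ ∧ dualWeakNorm 𝕜 q φ ≤ C :=
  have : Nonempty {x : E // ‖x‖ ≤ 1} := ⟨⟨0, by simp⟩⟩
  ⟨⟨C, h⟩, ciSup_le fun x => (h x.1 x.2).2⟩

theorem DualWeaklySummable.smul (hq : 0 < q) {φ : ℕ → StrongDual 𝕜 E}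
    (hφ : DualWeaklySummable 𝕜 q φ) {c : ℝ} (hc : 0 ≤ c) :
    DualWeaklySummable 𝕜 q (fun n => (c : 𝕜) • φ n) ∧
      dualWeakNorm 𝕜 q (fun n => (c : 𝕜) • φ n) ≤ c * dualWeakNorm 𝕜 q φ := by
  refine dualWeaklySummable_and_dualWeakNorm_le fun x hx => ?_
  have hterm : ∀ n, ‖((c : 𝕜) • φ n) x‖ ^ q = c ^ q * ‖φ n x‖ ^ q := fun n => by
    rw [smul_apply, norm_smul, RCLike.norm_ofReal, abs_of_nonneg hc,
      Real.mul_rpow hc (norm_nonneg _)]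
  refine ⟨((hφ.summable hx).mul_left _).congr fun n => (hterm n).symm, ?_⟩
  rw [tsum_congr hterm, tsum_mul_left,
    Real.mul_rpow (by positivity) (tsum_nonneg fun _ => by positivity), one_div,
    Real.rpow_rpow_inv hc hq.ne', ← one_div]
  exact mul_le_mul_of_nonneg_left (hφ.le_dualWeakNorm hx) hc

def dualWeakUnitBall (𝕜 : Type) [RCLike 𝕜] (q : ℝ) (E : Type) [NormedAddCommGroup E]
    [NormedSpace 𝕜 E] : Set (ℕ → StrongDual 𝕜 E) :=
  {ψ | DualWeaklySummable 𝕜 q ψ ∧ dualWeakNorm 𝕜 q ψ ≤ 1}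

theorem zero_mem_dualWeakUnitBall (hq : 0 < q) :
    (0 : ℕ → StrongDual 𝕜 E) ∈ dualWeakUnitBall 𝕜 q E :=
  dualWeaklySummable_and_dualWeakNorm_le fun _ _ => by
    simp [Real.zero_rpow hq.ne', Real.zero_rpow (inv_ne_zero hq.ne')]

theorem tsum_le_one_of_mem_dualWeakUnitBall (hq : 0 < q) {ψ : ℕ → StrongDual 𝕜 E}
    (hψ : ψ ∈ dualWeakUnitBall 𝕜 q E) {x : E} (hx : ‖x‖ ≤ 1) :
    ∑' n, ‖ψ n x‖ ^ q ≤ 1 := by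
  have h := (hψ.1.le_dualWeakNorm hx).trans hψ.2
  rwa [one_div, Real.rpow_inv_le_iff_of_pos (tsum_nonneg fun _ => by positivity) zero_le_one hq,
    Real.one_rpow] at h

namespace CohenSummable

variable {x : ℕ → E}

theorem summable_and_tsum_le_cohenNorm (hx : CohenSummable 𝕜 q x) {ψ : ℕ → StrongDual 𝕜 E}
    (hψ : ψ ∈ dualWeakUnitBall 𝕜 q E) :
    Summable (fun j => ‖ψ j (x j)‖) ∧ ∑' j, ‖ψ j (x j)‖ ≤ cohenNorm 𝕜 q x := by
  obtain ⟨C, hC⟩ := hx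
  refine ⟨(hC ψ hψ.1 hψ.2).1, le_ciSup (f := fun ψ : dualWeakUnitBall 𝕜 q E =>
    ∑' j, ‖ψ.1 j (x j)‖) ⟨C, ?_⟩ ⟨ψ, hψ⟩⟩
  rintro _ ⟨ψ, rfl⟩
  exact (hC ψ.1 ψ.2.1 ψ.2.2).2

theorem cohenNorm_nonneg (hq : 0 < q) (hx : CohenSummable 𝕜 q x) : 0 ≤ cohenNorm 𝕜 q x :=
  (tsum_nonneg fun _ => norm_nonneg _).trans
    (hx.summable_and_tsum_le_cohenNorm (zero_mem_dualWeakUnitBall hq)).2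

end CohenSummable

theorem cohenSummable_and_cohenNorm_le (hq : 0 < q) {x : ℕ → E} {C : ℝ}
    (h : ∀ ψ ∈ dualWeakUnitBall 𝕜 q E,
      Summable (fun j => ‖ψ j (x j)‖) ∧ ∑' j, ‖ψ j (x j)‖ ≤ C) :
    CohenSummable 𝕜 q x ∧ cohenNorm 𝕜 q x ≤ C :=
  have : Nonempty {ψ : ℕ → StrongDual 𝕜 E // DualWeaklySummable 𝕜 q ψ ∧ dualWeakNorm 𝕜 q ψ ≤ 1} :=
    ⟨⟨0, zero_mem_dualWeakUnitBall hq⟩⟩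
  ⟨⟨C, fun ψ h1 h2 => h ψ ⟨h1, h2⟩⟩, ciSup_le fun ψ => (h ψ.1 ψ.2).2⟩

theorem cohenSummable_and_cohenNorm_le_of_norm_le (hq : 0 < q) {x y : ℕ → E}
    (hy : CohenSummable 𝕜 q y) (h : ∀ j (ψ : StrongDual 𝕜 E), ‖ψ (x j)‖ ≤ ‖ψ (y j)‖) :
    CohenSummable 𝕜 q x ∧ cohenNorm 𝕜 q x ≤ cohenNorm 𝕜 q y :=
  cohenSummable_and_cohenNorm_le hq fun ψ hψ =>
    let ⟨hs, hle⟩ := hy.summable_and_tsum_le_cohenNorm hψ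
    have hs' := hs.of_nonneg_of_le (fun _ => norm_nonneg _) fun j => h j (ψ j)
    ⟨hs', (hs'.tsum_le_tsum (fun j => h j (ψ j)) hs).trans hle⟩

def cohenSubmodule (𝕜 : Type) [RCLike 𝕜] (q : ℝ) (E : Type) [NormedAddCommGroup E]
    [NormedSpace 𝕜 E] : Submodule 𝕜 (ℕ → E) where
  carrier := {x | CohenSummable 𝕜 q x}
  zero_mem' := ⟨0, fun _ _ _ => by simp⟩
  add_mem' := by
    rintro x y ⟨Cx, hx⟩ ⟨Cy, hy⟩
    refine ⟨Cx + Cy, fun ψ h1 h2 => ?_⟩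
    obtain ⟨hsx, hlx⟩ := hx ψ h1 h2
    obtain ⟨hsy, hly⟩ := hy ψ h1 h2
    have hle : ∀ j, ‖ψ j ((x + y) j)‖ ≤ ‖ψ j (x j)‖ + ‖ψ j (y j)‖ := fun j => by
      simpa using norm_add_le _ _
    have hs := (hsx.add hsy).of_nonneg_of_le (fun _ => norm_nonneg _) hle
    exact ⟨hs, ((hs.tsum_le_tsum hle (hsx.add hsy)).trans_eq (hsx.tsum_add hsy)).trans
      (add_le_add hlx hly)⟩
  smul_mem' := by
    rintro c x ⟨C, hx⟩
    refine ⟨‖c‖ * C, fun ψ h1 h2 => ?_⟩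
    obtain ⟨hs, hle⟩ := hx ψ h1 h2
    have heq : ∀ j, ‖ψ j ((c • x) j)‖ = ‖c‖ * ‖ψ j (x j)‖ := fun j => by simp
    simp_rw [heq, tsum_mul_left]
    exact ⟨hs.mul_left _, mul_le_mul_of_nonneg_left hle (norm_nonneg c)⟩

theorem cohenSummable_single (hq : 0 < q) (j : ℕ) (v : E) :
    CohenSummable 𝕜 q (Pi.single j v) ∧ cohenNorm 𝕜 q (Pi.single j v) ≤ ‖v‖ :=
  cohenSummable_and_cohenNorm_le hq fun ψ hψ => by
    have hsupp : ∀ i ≠ j, ‖ψ i ((Pi.single j v : ℕ → E) i)‖ = 0 := fun i hi => by simp [hi]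
    refine ⟨(hasSum_single j hsupp).summable, ?_⟩
    rw [tsum_eq_single j hsupp, Pi.single_eq_same, ← one_mul ‖v‖]
    exact (ψ j).le_of_opNorm_le ((hψ.1.norm_le_dualWeakNorm hq j).trans hψ.2) v

theorem cohenSummable_smul_const (hpq : p.HolderConjugate q) {b : ℕ → 𝕜}
    (hb : Summable fun j => ‖b j‖ ^ p) {v : E} (hv : ‖v‖ ≤ 1) :
    CohenSummable 𝕜 q (fun j => b j • v) ∧
      cohenNorm 𝕜 q (fun j => b j • v) ≤ (∑' j, ‖b j‖ ^ p) ^ (1 / p) :=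
  cohenSummable_and_cohenNorm_le hpq.symm.pos fun ψ hψ => by
    obtain ⟨hs, hle⟩ := Real.summable_and_inner_le_Lp_mul_Lq_tsum_of_nonneg hpq
      (fun j => norm_nonneg (b j)) (fun j => norm_nonneg (ψ j v)) hb (hψ.1.summable hv)
    simp_rw [map_smul, norm_smul]
    refine ⟨hs, hle.trans ?_⟩
    calc _ ≤ (∑' j, ‖b j‖ ^ p) ^ (1 / p) * 1 :=
          mul_le_mul_of_nonneg_left ((hψ.1.le_dualWeakNorm hv).trans hψ.2) (by positivity)
      _ = _ := mul_one _

theorem CohenSummable.summable_and_tsum_le_dualWeakNorm_mul_cohenNorm (hq : 0 < q) {x : ℕ → E}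
    (hx : CohenSummable 𝕜 q x) {φ : ℕ → StrongDual 𝕜 E} (hφ : DualWeaklySummable 𝕜 q φ) :
    Summable (fun j => ‖φ j (x j)‖) ∧
      ∑' j, ‖φ j (x j)‖ ≤ dualWeakNorm 𝕜 q φ * cohenNorm 𝕜 q x := by
  set D := dualWeakNorm 𝕜 q φ
  rcases hφ.dualWeakNorm_nonneg.eq_or_lt with hD | hD
  · have hzero : ∀ j, φ j = 0 := fun j =>
      norm_le_zero_iff.mp ((hφ.norm_le_dualWeakNorm hq j).trans hD.ge)
    simp [hzero, show D = 0 from hD.symm]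
  · have hψ := hφ.smul hq (inv_nonneg.2 hD.le)
    obtain ⟨hs, hle⟩ := hx.summable_and_tsum_le_cohenNorm
      ⟨hψ.1, hψ.2.trans_eq (inv_mul_cancel₀ hD.ne')⟩
    have heq : ∀ j, ‖φ j (x j)‖ = D * ‖((D⁻¹ : ℝ) : 𝕜) • φ j (x j)‖ := fun j => by
      rw [norm_smul, RCLike.norm_ofReal, abs_of_pos (inv_pos.2 hD), mul_inv_cancel_left₀ hD.ne']
    simp_rw [heq, tsum_mul_left]
    exact ⟨hs.mul_left D, mul_le_mul_of_nonneg_left hle hD.le⟩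

theorem exists_norming_finset (hpq : p.HolderConjugate q) {ι : Type*} (s : Finset ι)
    (c : ι → 𝕜) :
    ∃ b : ι → 𝕜, (∀ j ∉ s, b j = 0) ∧ ∑ j ∈ s, ‖b j‖ ^ p ≤ 1 ∧
      ∑ j ∈ s, b j * c j = (((∑ j ∈ s, ‖c j‖ ^ q) ^ (1 / q) : ℝ) : 𝕜) := by
  classical
  have hq : 0 < q := hpq.symm.pos
  set T := (∑ j ∈ s, ‖c j‖ ^ q) ^ (1 / q)
  have hTq : T ^ q = ∑ j ∈ s, ‖c j‖ ^ q := by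
    simp only [T]
    rw [one_div, Real.rpow_inv_rpow (Finset.sum_nonneg fun _ _ => by positivity) hq.ne']
  rcases (show 0 ≤ T by positivity).eq_or_lt with hT | hT
  · exact ⟨0, fun _ _ => rfl, by simp [Real.zero_rpow hpq.ne_zero], by simp [← hT]⟩
  -- the extremal vector of Hölder's inequality for `c`, normalised in `ℓ_p`
  set b : ι → 𝕜 := fun j =>
    if j ∈ s then ((‖c j‖ ^ (q - 2) / T ^ (q - 1) : ℝ) : 𝕜) * conj (c j) else 0
  have hb : ∀ j ∈ s, b j = ((‖c j‖ ^ (q - 2) / T ^ (q - 1) : ℝ) : 𝕜) * conj (c j) :=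
    fun j hj => if_pos hj
  refine ⟨b, fun j hj => if_neg hj, ?_, ?_⟩
  · have hterm : ∀ j ∈ s, ‖b j‖ ^ p = ‖c j‖ ^ q / T ^ q := fun j hj => by
      rw [hb j hj, norm_mul, RCLike.norm_conj, RCLike.norm_ofReal, abs_of_nonneg (by positivity),
        div_mul_eq_mul_div, ← Real.rpow_add_one' (norm_nonneg _) (by linarith [hpq.symm.lt]),
        Real.div_rpow (by positivity) (by positivity), ← Real.rpow_mul (norm_nonneg _),
        ← Real.rpow_mul hT.le, show q - 2 + 1 = q - 1 by ring, hpq.symm.sub_one_mul_conj]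
    rw [Finset.sum_congr rfl hterm, ← Finset.sum_div, ← hTq,
      div_self (Real.rpow_pos_of_pos hT q).ne']
  · have hterm : ∀ j ∈ s, b j * c j = ((‖c j‖ ^ q / T ^ (q - 1) : ℝ) : 𝕜) := fun j hj => by
      rw [hb j hj, mul_assoc, RCLike.conj_mul, ← RCLike.ofReal_pow, ← RCLike.ofReal_mul,
        div_mul_eq_mul_div, ← Real.rpow_natCast, Nat.cast_ofNat,
        ← Real.rpow_add' (norm_nonneg _) (by rw [sub_add_cancel]; exact hq.ne'), sub_add_cancel]
    rw [Finset.sum_congr rfl hterm, ← RCLike.ofReal_sum, ← Finset.sum_div, ← hTq,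
      ← Real.rpow_sub hT, sub_sub_cancel, Real.rpow_one]

theorem dualWeaklySummable_and_dualWeakNorm_le_of_pairing_le (hpq : p.HolderConjugate q)
    {φ : ℕ → StrongDual 𝕜 E} {C : ℝ}
    (h : ∀ (N : ℕ) (x : ℕ → E), CohenSummable 𝕜 q x → cohenNorm 𝕜 q x ≤ 1 →
      (∀ j, N ≤ j → x j = 0) → ‖∑ j ∈ Finset.range N, φ j (x j)‖ ≤ C) :
    DualWeaklySummable 𝕜 q φ ∧ dualWeakNorm 𝕜 q φ ≤ C := by
  have hq : 0 < q := hpq.symm.pos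
  refine dualWeaklySummable_and_dualWeakNorm_le fun v hv => ?_
  have hpartial : ∀ N, (∑ j ∈ Finset.range N, ‖φ j v‖ ^ q) ^ (1 / q) ≤ C := by
    intro N
    obtain ⟨b, hb0, hbp, hbc⟩ := exists_norming_finset hpq (Finset.range N) fun j => φ j v
    have hb : HasSum (fun j => ‖b j‖ ^ p) (∑ j ∈ Finset.range N, ‖b j‖ ^ p) :=
      hasSum_sum_of_ne_finset_zero fun j hj => by simp [hb0 j hj, Real.zero_rpow hpq.ne_zero]
    obtain ⟨hx, hx1⟩ := cohenSummable_smul_const hpq hb.summable hv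
    rw [hb.tsum_eq] at hx1
    have := h N _ hx (hx1.trans (Real.rpow_le_one (Finset.sum_nonneg fun _ _ => by positivity)
      hbp hpq.one_div_nonneg)) fun j hj => by simp [hb0 j (by simpa using hj)]
    simp only [map_smul, smul_eq_mul, hbc, RCLike.norm_ofReal] at this
    rwa [abs_of_nonneg (Real.rpow_nonneg (Finset.sum_nonneg fun _ _ => by positivity) _)] at this
  have hC : 0 ≤ C := (Real.rpow_nonneg le_rfl _).trans (by simpa using hpartial 0)
  have hle : ∀ N, ∑ j ∈ Finset.range N, ‖φ j v‖ ^ q ≤ C ^ q := fun N =>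
    (Real.rpow_inv_le_iff_of_pos (Finset.sum_nonneg fun _ _ => by positivity) hC hq).1
      (by simpa using hpartial N)
  refine ⟨summable_of_sum_range_le (fun _ => by positivity) hle, ?_⟩
  rw [one_div, Real.rpow_inv_le_iff_of_pos (tsum_nonneg fun _ => by positivity) hC hq]
  exact Real.tsum_le_of_sum_range_le (fun _ => by positivity) hle

theorem dualWeakNorm_eq_iSup_norm_tsum (hpq : p.HolderConjugate q) {φ : ℕ → StrongDual 𝕜 E}
    (hφ : DualWeaklySummable 𝕜 q φ) :
    dualWeakNorm 𝕜 q φ =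
      ⨆ x : {x : ℕ → E // CohenSummable 𝕜 q x ∧ cohenNorm 𝕜 q x ≤ 1}, ‖∑' j, φ j (x.1 j)‖ := by
  have hbound : ∀ x : {x : ℕ → E // CohenSummable 𝕜 q x ∧ cohenNorm 𝕜 q x ≤ 1},
      ‖∑' j, φ j (x.1 j)‖ ≤ dualWeakNorm 𝕜 q φ := fun ⟨x, hx, hx1⟩ =>
    let ⟨hs, hle⟩ := hx.summable_and_tsum_le_dualWeakNorm_mul_cohenNorm hpq.symm.pos hφ
    (norm_tsum_le_tsum_norm hs).trans
      (hle.trans (mul_le_of_le_one_right hφ.dualWeakNorm_nonneg hx1))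
  refine le_antisymm (dualWeaklySummable_and_dualWeakNorm_le_of_pairing_le hpq
    fun N x hx hx1 hsupp => ?_).2 (Real.iSup_le hbound hφ.dualWeakNorm_nonneg)
  have hsum : ∑' j, φ j (x j) = ∑ j ∈ Finset.range N, φ j (x j) :=
    tsum_eq_sum fun j hj => by simp [hsupp j (by simpa using hj)]
  rw [← hsum]
  exact le_ciSup (f := fun x : {x : ℕ → E // CohenSummable 𝕜 q x ∧ cohenNorm 𝕜 q x ≤ 1} =>
    ‖∑' j, φ j (x.1 j)‖) ⟨_, Set.forall_mem_range.2 hbound⟩ ⟨x, hx, hx1⟩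

def tailSeq (N : ℕ) (x : ℕ → E) : ℕ → E := fun j => if j < N then 0 else x j

@[simp]
theorem tailSeq_zero (x : ℕ → E) : tailSeq 0 x = x := rfl

theorem sum_single_add_tailSeq (N : ℕ) (x : ℕ → E) :
    ∑ j ∈ Finset.range N, Pi.single j (x j) + tailSeq N x = x := by
  funext i
  by_cases hi : i < N <;> simp [tailSeq, Finset.sum_apply, Pi.single_apply, hi]

theorem cohenSummable_tailSeq_and_cohenNorm_le (hq : 0 < q) {x : ℕ → E} {M N : ℕ}
    (hNM : N ≤ M) (hx : CohenSummable 𝕜 q (tailSeq N x)) :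
    CohenSummable 𝕜 q (tailSeq M x) ∧ cohenNorm 𝕜 q (tailSeq M x) ≤ cohenNorm 𝕜 q (tailSeq N x) :=
  cohenSummable_and_cohenNorm_le_of_norm_le hq hx fun j ψ => by
    by_cases hM : j < M
    · simp [tailSeq, hM]
    · have hN : ¬j < N := fun h => hM (h.trans_le hNM)
      simp [tailSeq, hM, hN]

theorem CohenSummable.tailSeq (hq : 0 < q) {x : ℕ → E} (hx : CohenSummable 𝕜 q x) (N : ℕ) :
    CohenSummable 𝕜 q (tailSeq N x) :=
  (cohenSummable_tailSeq_and_cohenNorm_le hq (Nat.zero_le N) (by rwa [tailSeq_zero])).1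

theorem exists_block_gt (hq : 0 < q) {x : ℕ → E} (hx : CohenSummable 𝕜 q x) {ε : ℝ} {n : ℕ}
    (h : ε < cohenNorm 𝕜 q (tailSeq n x)) :
    ∃ ψ ∈ dualWeakUnitBall 𝕜 q E, ∃ m, n ≤ m ∧ ε < ∑ j ∈ Finset.Ico n m, ‖ψ j (x j)‖ := by
  have : Nonempty {ψ : ℕ → StrongDual 𝕜 E // DualWeaklySummable 𝕜 q ψ ∧ dualWeakNorm 𝕜 q ψ ≤ 1} :=
    ⟨⟨0, zero_mem_dualWeakUnitBall hq⟩⟩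
  obtain ⟨⟨ψ, hψ⟩, hlt⟩ := exists_lt_of_lt_ciSup h
  have hs := ((hx.tailSeq hq n).summable_and_tsum_le_cohenNorm hψ).1
  obtain ⟨m, hm, hnm⟩ :=
    ((hs.hasSum.tendsto_sum_nat.eventually (lt_mem_nhds hlt)).and (eventually_ge_atTop n)).exists
  refine ⟨ψ, hψ, m, hnm, hm.trans_eq ?_⟩
  rw [Finset.range_eq_Ico, ← Finset.sum_Ico_consecutive _ (Nat.zero_le n) hnm,
    Finset.sum_eq_zero fun j hj => by simp [tailSeq, (Finset.mem_Ico.1 hj).2], zero_add]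
  exact Finset.sum_congr rfl fun j hj => by simp [tailSeq, (Finset.mem_Ico.1 hj).1.not_gt]

def blockGlue {M : Type*} [AddCommMonoid M] (K : ℕ) (I : ℕ → Finset ℕ) (ψ : ℕ → ℕ → M)
    (j : ℕ) : M :=
  ∑ k ∈ Finset.range K, if j ∈ I k then ψ k j else 0

theorem hasSum_blockGlue {M : Type*} [AddCommMonoid M] {K : ℕ} {I : ℕ → Finset ℕ}
    (hI : Pairwise (Disjoint on I)) (ψ : ℕ → ℕ → M) (F : ℕ → M → ℝ) (hF : ∀ j, F j 0 = 0) :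
    HasSum (fun j => F j (blockGlue K I ψ j)) (∑ k ∈ Finset.range K, ∑ j ∈ I k, F j (ψ k j)) := by
  have hblock : ∀ k ∈ Finset.range K, ∀ j ∈ I k, blockGlue K I ψ j = ψ k j := fun k hk j hj => by
    rw [blockGlue, Finset.sum_eq_single_of_mem k hk fun k' _ hne =>
      if_neg fun hj' => Finset.disjoint_left.1 (hI hne) hj' hj, if_pos hj]
  rw [Finset.sum_congr rfl fun k hk => Finset.sum_congr rfl fun j hj =>
    congrArg (F j) (hblock k hk j hj).symm, ← Finset.sum_biUnion (hI.set_pairwise _)]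
  refine hasSum_sum_of_ne_finset_zero fun j hj => ?_
  rw [blockGlue, Finset.sum_eq_zero fun k hk => if_neg fun hjk =>
    hj (Finset.mem_biUnion.2 ⟨k, hk, hjk⟩), hF]

theorem natCast_mul_le_rpow_mul_cohenNorm (hq : 0 < q) {x : ℕ → E} (hx : CohenSummable 𝕜 q x)
    (K : ℕ) {I : ℕ → Finset ℕ} (hI : Pairwise (Disjoint on I)) {ψ : ℕ → ℕ → StrongDual 𝕜 E}
    (hψ : ∀ k, ψ k ∈ dualWeakUnitBall 𝕜 q E) {ε : ℝ}
    (hε : ∀ k, ε ≤ ∑ j ∈ I k, ‖ψ k j (x j)‖) :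
    K * ε ≤ (K : ℝ) ^ (1 / q) * cohenNorm 𝕜 q x := by
  have hΦ : DualWeaklySummable 𝕜 q (blockGlue K I ψ) ∧
      dualWeakNorm 𝕜 q (blockGlue K I ψ) ≤ (K : ℝ) ^ (1 / q) := by
    refine dualWeaklySummable_and_dualWeakNorm_le fun v hv => ?_
    have hs := hasSum_blockGlue (K := K) hI ψ (fun _ φ => ‖φ v‖ ^ q) fun _ => by
      simp [Real.zero_rpow hq.ne']
    refine ⟨hs.summable, hs.tsum_eq ▸ Real.rpow_le_rpow (Finset.sum_nonneg fun _ _ =>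
      Finset.sum_nonneg fun _ _ => by positivity) ?_ (by positivity)⟩
    calc ∑ k ∈ Finset.range K, ∑ j ∈ I k, ‖ψ k j v‖ ^ q ≤ ∑ _k ∈ Finset.range K, (1 : ℝ) :=
          Finset.sum_le_sum fun k _ => (((hψ k).1.summable hv).sum_le_tsum _
            fun _ _ => by positivity).trans (tsum_le_one_of_mem_dualWeakUnitBall hq (hψ k) hv)
      _ = K := by simp
  have hsum := hasSum_blockGlue (K := K) hI ψ (fun j φ => ‖φ (x j)‖) fun _ => by simp
  calc (K : ℝ) * ε = ∑ _k ∈ Finset.range K, ε := by simp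
    _ ≤ ∑' j, ‖blockGlue K I ψ j (x j)‖ := hsum.tsum_eq ▸ Finset.sum_le_sum fun k _ => hε k
    _ ≤ dualWeakNorm 𝕜 q (blockGlue K I ψ) * cohenNorm 𝕜 q x :=
        (hx.summable_and_tsum_le_dualWeakNorm_mul_cohenNorm hq hΦ.1).2
    _ ≤ (K : ℝ) ^ (1 / q) * cohenNorm 𝕜 q x :=
        mul_le_mul_of_nonneg_right hΦ.2 (hx.cohenNorm_nonneg hq)

theorem tendsto_cohenNorm_tailSeq (hq : 1 < q) {x : ℕ → E} (hx : CohenSummable 𝕜 q x) :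
    Tendsto (fun N => cohenNorm 𝕜 q (tailSeq N x)) atTop (𝓝 0) := by
  have hq0 : 0 < q := by linarith
  refine tendsto_order.2 ⟨fun a ha => Eventually.of_forall fun N =>
    ha.trans_le ((hx.tailSeq hq0 N).cohenNorm_nonneg hq0), fun ε hε => ?_⟩
  suffices ∃ N, cohenNorm 𝕜 q (tailSeq N x) < ε by
    obtain ⟨N, hN⟩ := this
    exact eventually_atTop.2 ⟨N, fun M hM =>
      ((cohenSummable_tailSeq_and_cohenNorm_le hq0 hM (hx.tailSeq hq0 N)).2).trans_lt hN⟩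
  by_contra! hbig
  choose ψ hψ m hnm hm using fun n => exists_block_gt hq0 hx ((half_lt_self hε).trans_le (hbig n))
  set N : ℕ → ℕ := fun k => m^[k] 0
  have hN : ∀ k, N (k + 1) = m (N k) := fun k => Function.iterate_succ_apply' m k 0
  have hdisj : Pairwise (Disjoint on fun k => Finset.Ico (N k) (N (k + 1))) := by
    have := (monotone_nat_of_le_succ fun k => (hN k).symm ▸ hnm (N k)).pairwise_disjoint_on_Ico_succ
    exact fun i j hij => Finset.disjoint_coe.1
      (by simpa only [Finset.coe_Ico, Order.succ_eq_add_one] using this hij)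
  have hK : ∀ K : ℕ, K * (ε / 2) ≤ (K : ℝ) ^ (1 / q) * cohenNorm 𝕜 q x := fun K =>
    natCast_mul_le_rpow_mul_cohenNorm hq0 hx K hdisj (fun k => hψ (N k))
      fun k => (hN k ▸ hm (N k)).le
  have hlim : Tendsto (fun K : ℕ => (K : ℝ) ^ (1 - 1 / q) * (ε / 2)) atTop atTop :=
    ((tendsto_rpow_atTop (by rw [sub_pos, div_lt_one hq0]; exact hq)).comp
      tendsto_natCast_atTop_atTop).atTop_mul_const (by positivity)
  obtain ⟨K, hK1, hKx⟩ :=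
    ((eventually_ge_atTop 1).and (hlim.eventually_gt_atTop (cohenNorm 𝕜 q x))).exists
  have hKpos : (0 : ℝ) < K := by exact_mod_cast hK1
  have := mul_lt_mul_of_pos_left hKx (Real.rpow_pos_of_pos hKpos (1 / q))
  rw [← mul_assoc, ← Real.rpow_add hKpos, add_sub_cancel, Real.rpow_one] at this
  linarith [hK K]

def cohenSingle (hq : 0 < q) (j : ℕ) : E →ₗ[𝕜] cohenSubmodule 𝕜 q E :=
  (LinearMap.single 𝕜 (fun _ => E) j).codRestrict _ fun v => (cohenSummable_single hq j v).1

theorem sum_cohenSingle_add_tailSeq (hq : 0 < q) (x : cohenSubmodule 𝕜 q E) (N : ℕ) :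
    ∑ j ∈ Finset.range N, cohenSingle hq j ((x : ℕ → E) j) + ⟨tailSeq N x, x.2.tailSeq hq N⟩ =
      x :=
  Subtype.ext <| by
    rw [Submodule.coe_add, Submodule.coe_sum]
    exact sum_single_add_tailSeq N (x : ℕ → E)

theorem exists_dualWeaklySummable_tsum_eq (hpq : p.HolderConjugate q)
    (L : cohenSubmodule 𝕜 q E →ₗ[𝕜] 𝕜) {C : ℝ} (hC0 : 0 ≤ C)
    (hC : ∀ x, ‖L x‖ ≤ C * cohenNorm 𝕜 q (x : ℕ → E)) :
    ∃ φ : ℕ → StrongDual 𝕜 E, DualWeaklySummable 𝕜 q φ ∧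
      ∀ x : cohenSubmodule 𝕜 q E, L x = ∑' j, φ j ((x : ℕ → E) j) := by
  have hq : 0 < q := hpq.symm.pos
  let φ (j : ℕ) : StrongDual 𝕜 E := (L ∘ₗ cohenSingle hq j).mkContinuous C fun v =>
    (hC _).trans (mul_le_mul_of_nonneg_left (cohenSummable_single hq j v).2 hC0)
  have hsplit : ∀ (x : cohenSubmodule 𝕜 q E) (N : ℕ),
      L x = ∑ j ∈ Finset.range N, φ j ((x : ℕ → E) j) + L ⟨tailSeq N x, x.2.tailSeq hq N⟩ := by
    intro x N
    conv_lhs => rw [← sum_cohenSingle_add_tailSeq hq x N]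
    simp [φ]
  have hfinite : ∀ (N : ℕ) (x : ℕ → E) (hx : CohenSummable 𝕜 q x), (∀ j, N ≤ j → x j = 0) →
      L ⟨x, hx⟩ = ∑ j ∈ Finset.range N, φ j (x j) := fun N x hx hsupp => by
    have htail : tailSeq N x = 0 := funext fun j => by
      by_cases hj : j < N
      · simp [tailSeq, hj]
      · simp [tailSeq, hj, hsupp j (not_lt.1 hj)]
    have := hsplit ⟨x, hx⟩ N
    simp only [htail] at this
    rwa [show L ⟨0, _⟩ = 0 from map_zero L, add_zero] at this
  have hφ : DualWeaklySummable 𝕜 q φ := (dualWeaklySummable_and_dualWeakNorm_le_of_pairing_le hpq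
    fun N x hx hx1 hsupp => hfinite N x hx hsupp ▸ (hC _).trans (mul_le_of_le_one_right hC0 hx1)).1
  refine ⟨φ, hφ, fun x => ?_⟩
  have hconv : Tendsto (fun N => ∑ j ∈ Finset.range N, φ j ((x : ℕ → E) j)) atTop (𝓝 (L x)) := by
    rw [tendsto_iff_norm_sub_tendsto_zero]
    refine squeeze_zero (fun _ => norm_nonneg _) (fun N => ?_)
      (by simpa using (tendsto_cohenNorm_tailSeq hpq.symm.lt x.2).const_mul C)
    rw [hsplit x N, sub_add_cancel_left, norm_neg]
    exact hC _
  have hsum := (x.2.summable_and_tsum_le_dualWeakNorm_mul_cohenNorm hq hφ).1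
  exact tendsto_nhds_unique hconv hsum.of_norm.hasSum.tendsto_sum_nat

end

theorem cohen_dual_eq_weak_general
    (𝕜 : Type) [RCLike 𝕜] (p q : ℝ) (hp : 1 < p) (hpq : 1 / p + 1 / q = 1)
    (E : Type) [NormedAddCommGroup E] [NormedSpace 𝕜 E] :
    (∀ φ : ℕ → StrongDual 𝕜 E, DualWeaklySummable 𝕜 q φ →
      ∀ x : ℕ → E, CohenSummable 𝕜 q x → Summable (fun j => ‖φ j (x j)‖)) ∧
    (∀ φ : ℕ → StrongDual 𝕜 E, DualWeaklySummable 𝕜 q φ →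
      dualWeakNorm 𝕜 q φ =
        ⨆ x : {x : ℕ → E // CohenSummable 𝕜 q x ∧ cohenNorm 𝕜 q x ≤ 1},
          ‖∑' j, φ j (x.1 j)‖) ∧
    (∀ f : (ℕ → E) → 𝕜,
      (∀ x y, CohenSummable 𝕜 q x → CohenSummable 𝕜 q y → f (x + y) = f x + f y) →
      (∀ (c : 𝕜) x, CohenSummable 𝕜 q x → f (c • x) = c * f x) →
      (∃ C : ℝ, ∀ x, CohenSummable 𝕜 q x → ‖f x‖ ≤ C * cohenNorm 𝕜 q x) →
      ∃ φ : ℕ → StrongDual 𝕜 E, DualWeaklySummable 𝕜 q φ ∧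
        ∀ x, CohenSummable 𝕜 q x → f x = ∑' j, φ j (x j)) := by
  have hpq' : p.HolderConjugate q :=
    Real.holderConjugate_iff.2 ⟨hp, by simpa only [one_div] using hpq⟩
  have hq : 0 < q := hpq'.symm.pos
  refine ⟨fun φ hφ x hx => (hx.summable_and_tsum_le_dualWeakNorm_mul_cohenNorm hq hφ).1,
    fun φ hφ => dualWeakNorm_eq_iSup_norm_tsum hpq' hφ, fun f hadd hsmul ⟨C, hC⟩ => ?_⟩
  let L : cohenSubmodule 𝕜 q E →ₗ[𝕜] 𝕜 :=
    { toFun := fun x => f x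
      map_add' := fun x y => hadd x y x.2 y.2
      map_smul' := fun c x => hsmul c x x.2 }
  obtain ⟨φ, hφ, hL⟩ := exists_dualWeaklySummable_tsum_eq hpq' L (le_max_right C 0) fun x =>
    (hC x x.2).trans (mul_le_mul_of_nonneg_right (le_max_left C 0) (x.2.cohenNorm_nonneg hq))
  exact ⟨φ, hφ, fun x hx => hL ⟨x, hx⟩⟩

/-- For `1 < p < ∞`, the dual of `ℓ_p⟨E⟩` is isometrically isomorphic to
`ℓ_{p*}^w(E')` via the canonical pairing `((φ_j),(x_j)) ↦ Σ_j φ_j(x_j)`: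
the pairing converges, is isometric, and every bounded linear functional on `ℓ_p⟨E⟩`
arises this way. -/
theorem cohen_dual_eq_weak
    (𝕜 : Type) [RCLike 𝕜] (p q : ℝ) (hp : 1 < p) (hpq : 1 / p + 1 / q = 1)
    (E : Type) [NormedAddCommGroup E] [NormedSpace 𝕜 E] [CompleteSpace E] :
    (∀ φ : ℕ → StrongDual 𝕜 E, DualWeaklySummable 𝕜 q φ →
      ∀ x : ℕ → E, CohenSummable 𝕜 q x → Summable (fun j => ‖φ j (x j)‖)) ∧
    (∀ φ : ℕ → StrongDual 𝕜 E, DualWeaklySummable 𝕜 q φ →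
      dualWeakNorm 𝕜 q φ =
        ⨆ x : {x : ℕ → E // CohenSummable 𝕜 q x ∧ cohenNorm 𝕜 q x ≤ 1},
          ‖∑' j, φ j (x.1 j)‖) ∧
    (∀ f : (ℕ → E) → 𝕜,
      (∀ x y, CohenSummable 𝕜 q x → CohenSummable 𝕜 q y → f (x + y) = f x + f y) →
      (∀ (c : 𝕜) x, CohenSummable 𝕜 q x → f (c • x) = c * f x) →
      (∃ C : ℝ, ∀ x, CohenSummable 𝕜 q x → ‖f x‖ ≤ C * cohenNorm 𝕜 q x) →
      ∃ φ : ℕ → StrongDual 𝕜 E, DualWeaklySummable 𝕜 q φ ∧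
        ∀ x, CohenSummable 𝕜 q x → f x = ∑' j, φ j (x j)) :=
  cohen_dual_eq_weak_general 𝕜 p q hp hpq E
end

section
/- Characterization of mid p-summability: a sequence (x_j) in a Banach space E belongs to ℓ_p^{mid}(E) if and only if for every weakly p-summable sequence (φ_n) in E', the double-indexed family ((φ_n(x_j))_n)_j belongs to ℓ_p(ℓ_p), i.e., Σ_j Σ_n |φ_n(x_j)|^p < ∞. -/
/-!
Everything is measured in `ℝ≥0∞`: `dualWeakPowSum p φ` is the `p`-th power of the weak `ℓ_p` norm
of `(φ_n)` and `midPowSum p φ x = Σ_n Σ_j ‖φ_n(x_j)‖^p`; both get multiplied by `‖c‖^p` when `φ`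
is replaced by `c • φ`. Mid summability says that `midPowSum` is bounded on the unit ball
`dualWeakPowSum p φ ≤ 1`, so by homogeneity it is finite whenever `dualWeakPowSum` is.
Conversely, if it is finite on every weakly `p`-summable family but unbounded on the unit ball,
choose `Φ_k` in the ball with `midPowSum p Φ_k x > 2^k` and scalars with `‖c_k‖^p = 2^{-k}`.
The merged family `(k, n) ↦ c_k Φ_{k,n}` has weak sum at most `Σ_k 2^{-k} < ∞`, while its
`midPowSum` is at least `Σ_k 1 = ∞`.
-/

open Filter Topology NormedSpace
open scoped TensorProduct ENNReal

section NormRpow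

variable {ι κ F : Type*} [SeminormedAddCommGroup F] {p : ℝ}

lemma ENNReal.summable_toReal_iff {f : ι → ℝ≥0∞} (hf : ∀ i, f i ≠ ⊤) :
    Summable (fun i => (f i).toReal) ↔ ∑' i, f i ≠ ⊤ := by
  lift f to ι → NNReal using hf
  exact ENNReal.tsum_coe_ne_top_iff_summable_coe.symm

lemma toReal_enorm_rpow (a : F) (p : ℝ) : (‖a‖ₑ ^ p).toReal = ‖a‖ ^ p := by
  rw [← ENNReal.toReal_rpow, toReal_enorm]

lemma enorm_rpow_ne_top (a : F) (hp : 0 ≤ p) : ‖a‖ₑ ^ p ≠ ⊤ :=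
  ENNReal.rpow_ne_top_of_nonneg hp enorm_ne_top

lemma summable_norm_rpow_iff (hp : 0 ≤ p) (g : ι → F) :
    Summable (fun i => ‖g i‖ ^ p) ↔ ∑' i, ‖g i‖ₑ ^ p ≠ ⊤ := by
  simp_rw [← toReal_enorm_rpow]
  exact ENNReal.summable_toReal_iff fun i => enorm_rpow_ne_top _ hp

lemma tsum_norm_rpow_eq_toReal (hp : 0 ≤ p) (g : ι → F) :
    ∑' i, ‖g i‖ ^ p = (∑' i, ‖g i‖ₑ ^ p).toReal := by
  simp_rw [ENNReal.tsum_toReal_eq fun i => enorm_rpow_ne_top (g i) hp, toReal_enorm_rpow]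

lemma summable_tsum_norm_rpow_iff (hp : 0 ≤ p) (g : ι → κ → F) :
    ((∀ n, Summable fun j => ‖g n j‖ ^ p) ∧ Summable fun n => ∑' j, ‖g n j‖ ^ p) ↔
      ∑' n, ∑' j, ‖g n j‖ₑ ^ p ≠ ⊤ := by
  simp_rw [summable_norm_rpow_iff hp, tsum_norm_rpow_eq_toReal hp]
  constructor
  · rintro ⟨hrow, hsum⟩
    exact (ENNReal.summable_toReal_iff hrow).1 hsum
  · intro h
    have hrow := ENNReal.ne_top_of_tsum_ne_top h
    exact ⟨hrow, (ENNReal.summable_toReal_iff hrow).2 h⟩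

lemma ENNReal.ne_top_and_toReal_rpow_one_div_le_iff {s : ℝ≥0∞} (hp : 0 < p) {C : ℝ}
    (hC : 0 ≤ C) : (s ≠ ⊤ ∧ s.toReal ^ (1 / p) ≤ C) ↔ s ≤ ENNReal.ofReal C ^ p := by
  have key (hs : s ≠ ⊤) : s.toReal ^ (1 / p) ≤ C ↔ s ≤ ENNReal.ofReal C ^ p := by
    rw [ENNReal.toReal_rpow, ← ENNReal.le_ofReal_iff_toReal_le
      (ENNReal.rpow_ne_top_of_nonneg (by positivity) hs) hC, one_div, ENNReal.rpow_inv_le_iff hp]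
  refine ⟨fun ⟨hs, hle⟩ => (key hs).1 hle, fun hle => ?_⟩
  have hs := ne_top_of_le_ne_top (ENNReal.rpow_ne_top_of_nonneg hp.le ENNReal.ofReal_ne_top) hle
  exact ⟨hs, (key hs).2 hle⟩

lemma ENNReal.ofReal_toReal_rpow_one_div_rpow {s : ℝ≥0∞} (hs : s ≠ ⊤) (hp : 0 < p) :
    ENNReal.ofReal (s.toReal ^ (1 / p)) ^ p = s := by
  rw [ENNReal.toReal_rpow,
    ENNReal.ofReal_toReal (ENNReal.rpow_ne_top_of_nonneg (by positivity) hs), one_div,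
    ENNReal.rpow_inv_rpow hp.ne']

lemma summable_norm_rpow_and_le_iff (hp : 0 < p) {C : ℝ} (hC : 0 ≤ C) (g : ι → F) :
    (Summable (fun i => ‖g i‖ ^ p) ∧ (∑' i, ‖g i‖ ^ p) ^ (1 / p) ≤ C) ↔
      ∑' i, ‖g i‖ₑ ^ p ≤ ENNReal.ofReal C ^ p := by
  rw [summable_norm_rpow_iff hp.le, tsum_norm_rpow_eq_toReal hp.le]
  exact ENNReal.ne_top_and_toReal_rpow_one_div_le_iff hp hC

lemma summable_tsum_norm_rpow_and_le_iff (hp : 0 < p) {C : ℝ} (hC : 0 ≤ C) (g : ι → κ → F) :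
    ((∀ n, Summable fun j => ‖g n j‖ ^ p) ∧ (Summable fun n => ∑' j, ‖g n j‖ ^ p) ∧
        (∑' n, ∑' j, ‖g n j‖ ^ p) ^ (1 / p) ≤ C) ↔
      ∑' n, ∑' j, ‖g n j‖ₑ ^ p ≤ ENNReal.ofReal C ^ p := by
  rw [← and_assoc, summable_tsum_norm_rpow_iff hp.le,
    ← ENNReal.ne_top_and_toReal_rpow_one_div_le_iff hp hC]
  refine and_congr_right fun h => ?_
  simp_rw [tsum_norm_rpow_eq_toReal hp.le]
  rw [ENNReal.tsum_toReal_eq (ENNReal.ne_top_of_tsum_ne_top h)]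

lemma RCLike.exists_enorm_rpow_eq (𝕜 : Type*) [RCLike 𝕜] (hp : 0 < p) {t : ℝ≥0∞} (ht : t ≠ ⊤) :
    ∃ c : 𝕜, ‖c‖ₑ ^ p = t := by
  refine ⟨((t ^ p⁻¹).toReal : 𝕜), ?_⟩
  rw [← ofReal_norm, RCLike.norm_ofReal, abs_of_nonneg ENNReal.toReal_nonneg,
    ENNReal.ofReal_toReal (ENNReal.rpow_ne_top_of_nonneg (by positivity) ht),
    ENNReal.rpow_inv_rpow hp.ne']

end NormRpow

section PowSums

variable {𝕜 E ι ι' κ : Type*} [RCLike 𝕜] [NormedAddCommGroup E] [NormedSpace 𝕜 E] {p : ℝ}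

/-- `dualWeakNorm 𝕜 p φ ^ p`, valued in `ℝ≥0∞` so that it is `⊤`, rather than a junk value, when
`φ` is not weakly `p`-summable. -/
noncomputable def dualWeakPowSum (p : ℝ) (φ : ι → StrongDual 𝕜 E) : ℝ≥0∞ :=
  ⨆ (y : E) (_ : ‖y‖ ≤ 1), ∑' n, ‖φ n y‖ₑ ^ p

noncomputable def midPowSum (p : ℝ) (φ : ι → StrongDual 𝕜 E) (x : κ → E) : ℝ≥0∞ :=
  ∑' n, ∑' j, ‖φ n (x j)‖ₑ ^ p

lemma enorm_smul_apply_rpow (hp : 0 ≤ p) (c : 𝕜) (f : StrongDual 𝕜 E) (y : E) :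
    ‖(c • f) y‖ₑ ^ p = ‖c‖ₑ ^ p * ‖f y‖ₑ ^ p := by
  rw [smul_apply, enorm_smul, ENNReal.mul_rpow_of_nonneg _ _ hp]

lemma dualWeakPowSum_const_smul (hp : 0 ≤ p) (c : 𝕜) (φ : ι → StrongDual 𝕜 E) :
    dualWeakPowSum p (fun n => c • φ n) = ‖c‖ₑ ^ p * dualWeakPowSum p φ := by
  simp only [dualWeakPowSum, enorm_smul_apply_rpow hp, ENNReal.tsum_mul_left, ENNReal.mul_iSup]

lemma midPowSum_const_smul (hp : 0 ≤ p) (c : 𝕜) (φ : ι → StrongDual 𝕜 E) (x : κ → E) :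
    midPowSum p (fun n => c • φ n) x = ‖c‖ₑ ^ p * midPowSum p φ x := by
  simp only [midPowSum, enorm_smul_apply_rpow hp, ENNReal.tsum_mul_left]

lemma dualWeakPowSum_comp_equiv (e : ι' ≃ ι) (φ : ι → StrongDual 𝕜 E) :
    dualWeakPowSum p (φ ∘ e) = dualWeakPowSum p φ := by
  simp only [dualWeakPowSum, Function.comp_apply]
  congr! 3 with y
  exact e.tsum_eq fun n => ‖φ n y‖ₑ ^ p

lemma midPowSum_comp_equiv (e : ι' ≃ ι) (φ : ι → StrongDual 𝕜 E) (x : κ → E) :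
    midPowSum p (φ ∘ e) x = midPowSum p φ x :=
  e.tsum_eq fun n => ∑' j, ‖φ n (x j)‖ₑ ^ p

lemma dualWeakPowSum_uncurry_le (φ : ι → ι' → StrongDual 𝕜 E) :
    dualWeakPowSum p (fun i : ι × ι' => φ i.1 i.2) ≤ ∑' k, dualWeakPowSum p (φ k) := by
  refine iSup₂_le fun y hy => ?_
  rw [ENNReal.tsum_prod' (f := fun i : ι × ι' => ‖φ i.1 i.2 y‖ₑ ^ p)]
  exact ENNReal.tsum_le_tsum fun k =>
    le_iSup₂ (f := fun y (_ : ‖y‖ ≤ 1) => ∑' n, ‖φ k n y‖ₑ ^ p) y hy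

lemma midPowSum_uncurry (φ : ι → ι' → StrongDual 𝕜 E) (x : κ → E) :
    midPowSum p (fun i : ι × ι' => φ i.1 i.2) x = ∑' k, midPowSum p (φ k) x :=
  ENNReal.tsum_prod' (f := fun i : ι × ι' => ∑' j, ‖φ i.1 i.2 (x j)‖ₑ ^ p)

end PowSums

section UniformBound

variable {𝕜 E ι κ : Type*} [RCLike 𝕜] [NormedAddCommGroup E] [NormedSpace 𝕜 E] {p : ℝ}
  {x : κ → E}

lemma midPowSum_ne_top_of_forall_le {M : ℝ≥0∞} (hp : 0 < p) (hM : M ≠ ⊤)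
    (h : ∀ φ : ι → StrongDual 𝕜 E, dualWeakPowSum p φ ≤ 1 → midPowSum p φ x ≤ M)
    {φ : ι → StrongDual 𝕜 E} (hφ : dualWeakPowSum p φ ≠ ⊤) : midPowSum p φ x ≠ ⊤ := by
  set W := dualWeakPowSum p φ + 1
  have hW : W ≠ 0 := by simp [W]
  have hW' : W ≠ ⊤ := by simp [W, hφ]
  obtain ⟨c, hc⟩ := RCLike.exists_enorm_rpow_eq 𝕜 hp (ENNReal.inv_ne_top.2 hW)
  have hnormalized : dualWeakPowSum p (fun n => c • φ n) ≤ 1 := by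
    rw [dualWeakPowSum_const_smul hp.le, hc, ← ENNReal.div_eq_inv_mul,
      ENNReal.div_le_iff hW hW', one_mul]
    exact le_self_add
  have hmid := h _ hnormalized
  rw [midPowSum_const_smul hp.le, hc, ENNReal.inv_mul_le_iff hW hW'] at hmid
  exact ne_top_of_le_ne_top (ENNReal.mul_ne_top hW' hM) hmid

lemma exists_forall_midPowSum_le (hp : 0 < p)
    (h : ∀ φ : ℕ → StrongDual 𝕜 E, dualWeakPowSum p φ ≠ ⊤ → midPowSum p φ x ≠ ⊤) :
    ∃ M ≠ ⊤, ∀ φ : ℕ → StrongDual 𝕜 E, dualWeakPowSum p φ ≤ 1 → midPowSum p φ x ≤ M := by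
  by_contra! hunbdd
  choose Φ hΦ hΦx using fun k : ℕ => hunbdd (2 ^ k) (ENNReal.pow_ne_top ENNReal.ofNat_ne_top)
  choose c hc using fun k : ℕ =>
    RCLike.exists_enorm_rpow_eq 𝕜 hp (ENNReal.pow_ne_top (ENNReal.inv_ne_top.2 two_ne_zero) :
      (2⁻¹ : ℝ≥0∞) ^ k ≠ ⊤)
  set Ψ : ℕ → ℕ → StrongDual 𝕜 E := fun k n => c k • Φ k n
  set ψ : ℕ × ℕ → StrongDual 𝕜 E := fun i => Ψ i.1 i.2
  have hψ : dualWeakPowSum p ψ ≠ ⊤ := by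
    have hsum : ∑' k, dualWeakPowSum p (Ψ k) ≤ ∑' k : ℕ, (2⁻¹ : ℝ≥0∞) ^ k :=
      ENNReal.tsum_le_tsum fun k => by
        rw [dualWeakPowSum_const_smul hp.le, hc]
        exact mul_le_of_le_one_right' (hΦ k)
    refine ne_top_of_le_ne_top ?_ ((dualWeakPowSum_uncurry_le Ψ).trans hsum)
    simp [ENNReal.tsum_geometric]
  have hψx : midPowSum p ψ x = ⊤ := by
    refine top_unique ?_
    calc ⊤ = ∑' _ : ℕ, (1 : ℝ≥0∞) := (ENNReal.tsum_const_eq_top_of_ne_zero one_ne_zero).symm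
      _ ≤ ∑' k, midPowSum p (Ψ k) x := ENNReal.tsum_le_tsum fun k => ?_
      _ = midPowSum p ψ x := (midPowSum_uncurry Ψ x).symm
    rw [midPowSum_const_smul hp.le, hc]
    calc (1 : ℝ≥0∞) = 2⁻¹ ^ k * 2 ^ k := by
          rw [← mul_pow, ENNReal.inv_mul_cancel two_ne_zero ENNReal.ofNat_ne_top, one_pow]
      _ ≤ 2⁻¹ ^ k * midPowSum p (Φ k) x := by gcongr; exact (hΦx k).le
  let e := Denumerable.eqv (ℕ × ℕ)
  exact h (ψ ∘ e.symm) (by rwa [dualWeakPowSum_comp_equiv]) (by rwa [midPowSum_comp_equiv])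

lemma forall_midPowSum_ne_top_iff (hp : 0 < p) :
    (∀ φ : ℕ → StrongDual 𝕜 E, dualWeakPowSum p φ ≠ ⊤ → midPowSum p φ x ≠ ⊤) ↔
      ∃ M ≠ ⊤, ∀ φ : ℕ → StrongDual 𝕜 E, dualWeakPowSum p φ ≤ 1 → midPowSum p φ x ≤ M :=
  ⟨exists_forall_midPowSum_le hp, fun ⟨_, hM, h⟩ _ => midPowSum_ne_top_of_forall_le hp hM h⟩

end UniformBound

section Characterizations

variable {𝕜 E : Type} [RCLike 𝕜] [NormedAddCommGroup E] [NormedSpace 𝕜 E] {p : ℝ}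

lemma dualWeaklySummable_iff_dualWeakPowSum_ne_top (hp : 0 < p) {φ : ℕ → StrongDual 𝕜 E} :
    DualWeaklySummable 𝕜 p φ ↔ dualWeakPowSum p φ ≠ ⊤ := by
  constructor
  · rintro ⟨C, hC⟩
    have hC0 : 0 ≤ C := (Real.rpow_nonneg (tsum_nonneg fun n => by positivity) _).trans
      (hC 0 (by simp)).2
    exact ne_top_of_le_ne_top (ENNReal.rpow_ne_top_of_nonneg hp.le ENNReal.ofReal_ne_top)
      (iSup₂_le fun y hy => (summable_norm_rpow_and_le_iff hp hC0 _).1 (hC y hy))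
  · intro h
    refine ⟨(dualWeakPowSum p φ).toReal ^ (1 / p), fun y hy =>
      (summable_norm_rpow_and_le_iff hp (by positivity) _).2 ?_⟩
    rw [ENNReal.ofReal_toReal_rpow_one_div_rpow h hp]
    exact le_iSup₂ (f := fun y (_ : ‖y‖ ≤ 1) => ∑' n, ‖φ n y‖ₑ ^ p) y hy

lemma dualWeaklySummable_and_dualWeakNorm_le_iff (hp : 0 < p) {C : ℝ} (hC : 0 ≤ C)
    {φ : ℕ → StrongDual 𝕜 E} :
    DualWeaklySummable 𝕜 p φ ∧ dualWeakNorm 𝕜 p φ ≤ C ↔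
      dualWeakPowSum p φ ≤ ENNReal.ofReal C ^ p := by
  simp only [dualWeakPowSum, iSup₂_le_iff, ← summable_norm_rpow_and_le_iff hp hC]
  constructor
  · rintro ⟨⟨D, hD⟩, hle⟩ y hy
    have hbdd : BddAbove (Set.range fun z : {z : E // ‖z‖ ≤ 1} =>
        (∑' n, ‖φ n z.1‖ ^ p) ^ (1 / p)) :=
      ⟨D, Set.forall_mem_range.2 fun z => (hD z.1 z.2).2⟩
    exact ⟨(hD y hy).1, (le_ciSup hbdd ⟨y, hy⟩).trans hle⟩
  · intro h
    have : Nonempty {y : E // ‖y‖ ≤ 1} := ⟨⟨0, by simp⟩⟩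
    exact ⟨⟨C, h⟩, ciSup_le fun y => (h y.1 y.2).2⟩

lemma midSummable_iff_exists_forall_midPowSum_le (hp : 0 < p) (x : ℕ → E) :
    MidSummable 𝕜 p x ↔
      ∃ M ≠ ⊤, ∀ φ : ℕ → StrongDual 𝕜 E, dualWeakPowSum p φ ≤ 1 → midPowSum p φ x ≤ M := by
  have hnormalized (φ : ℕ → StrongDual 𝕜 E) :
      DualWeaklySummable 𝕜 p φ ∧ dualWeakNorm 𝕜 p φ ≤ 1 ↔ dualWeakPowSum p φ ≤ 1 := by
    simpa using dualWeaklySummable_and_dualWeakNorm_le_iff hp zero_le_one (φ := φ)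
  simp only [MidSummable, ← and_imp, hnormalized]
  constructor
  · rintro ⟨C, hC⟩
    refine ⟨ENNReal.ofReal (max C 0) ^ p,
      ENNReal.rpow_ne_top_of_nonneg hp.le ENNReal.ofReal_ne_top, fun φ hφ => ?_⟩
    obtain ⟨hrow, hsum, hle⟩ := hC φ hφ
    exact (summable_tsum_norm_rpow_and_le_iff hp (le_max_right C 0) _).1
      ⟨hrow, hsum, hle.trans (le_max_left C 0)⟩
  · rintro ⟨M, hM, hle⟩
    refine ⟨M.toReal ^ (1 / p), fun φ hφ =>
      (summable_tsum_norm_rpow_and_le_iff hp (by positivity) _).2 ?_⟩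
    rw [ENNReal.ofReal_toReal_rpow_one_div_rpow hM hp]
    exact hle φ hφ

end Characterizations

theorem midSummable_iff_double_summable_general
    (𝕜 : Type) [RCLike 𝕜] (p : ℝ) (hp : 1 ≤ p)
    (E : Type) [NormedAddCommGroup E] [NormedSpace 𝕜 E]
    (x : ℕ → E) :
    MidSummable 𝕜 p x ↔
      ∀ φ : ℕ → StrongDual 𝕜 E, DualWeaklySummable 𝕜 p φ →
        (∀ j, Summable fun n => ‖φ n (x j)‖ ^ p) ∧
        Summable (fun j => ∑' n, ‖φ n (x j)‖ ^ p) := by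
  have hp0 : 0 < p := by linarith
  rw [midSummable_iff_exists_forall_midPowSum_le hp0, ← forall_midPowSum_ne_top_iff hp0]
  refine forall_congr' fun φ =>
    imp_congr (dualWeaklySummable_iff_dualWeakPowSum_ne_top hp0).symm ?_
  rw [midPowSum, ENNReal.tsum_comm]
  exact (summable_tsum_norm_rpow_iff hp0.le fun j n => φ n (x j)).symm

/-- A sequence `(x_j)` in `E` is mid `p`-summable iff for every weakly
`p`-summable sequence `(φ_n)` in `E'` one has `Σ_j Σ_n |φ_n(x_j)|^p < ∞`. -/
theorem midSummable_iff_double_summable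
    (𝕜 : Type) [RCLike 𝕜] (p : ℝ) (hp : 1 ≤ p)
    (E : Type) [NormedAddCommGroup E] [NormedSpace 𝕜 E] [CompleteSpace E]
    (x : ℕ → E) :
    MidSummable 𝕜 p x ↔
      ∀ φ : ℕ → StrongDual 𝕜 E, DualWeaklySummable 𝕜 p φ →
        (∀ j, Summable fun n => ‖φ n (x j)‖ ^ p) ∧
        Summable (fun j => ∑' n, ‖φ n (x j)‖ ^ p) :=
  midSummable_iff_double_summable_general 𝕜 p hp E x
end
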